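/- arXiv:2312.03473 — 2 statements merged into one kernel-verified Lean document; each statement's English description precedes it below -/
import Mathlib

section
/- Let K ⊆ ℝ^n be a locally anti-blocking convex body, let I ⊆ {1,…,n} and E = span{e_i : i ∈ I}. Let σ, τ ∈ {−1,1}^n be sign vectors with σ_i = τ_i for all i ∈ I, and write K_σ = K ∩ σℝ_+^n, K_τ = K ∩ τℝ_+^n. Then P_E K_σ = P_E K_τ, where P_E denotes orthogonal projection onto E. -/
open MeasureTheory
open scoped Pointwise

noncomputable section

/-- The nonnegative orthant `ℝ₊ⁿ`. -/
def nonnegOrthant (n : ℕ) : Set (EuclideanSpace ℝ (Fin n)) := {x | ∀ i, 0 ≤ x i}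

/-- The sign `±1` associated to a boolean. -/
def sgn (b : Bool) : ℝ := if b then 1 else -1

/-- The closed orthant `σ ℝ₊ⁿ` corresponding to a sign vector `σ ∈ {-1,1}ⁿ`. -/
def signedOrthant {n : ℕ} (σ : Fin n → Bool) : Set (EuclideanSpace ℝ (Fin n)) :=
  {x | ∀ i, 0 ≤ sgn (σ i) * x i}

/-- Coordinatewise reflection `σ S = {(σ₁x₁, …, σₙxₙ) : x ∈ S}`. -/
def sigmaAct {n : ℕ} (σ : Fin n → Bool) (S : Set (EuclideanSpace ℝ (Fin n))) :
    Set (EuclideanSpace ℝ (Fin n)) :=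
  (fun x : EuclideanSpace ℝ (Fin n) => (WithLp.toLp 2 (fun i => sgn (σ i) * x i) : EuclideanSpace ℝ (Fin n))) '' S

/-- Orthogonal projection onto the coordinate subspace `span {eᵢ : i ∈ I}`. -/
def coordProj {n : ℕ} (I : Finset (Fin n)) (x : EuclideanSpace ℝ (Fin n)) :
    EuclideanSpace ℝ (Fin n) :=
  (WithLp.toLp 2 (fun i => if i ∈ I then x i else 0) : EuclideanSpace ℝ (Fin n))

/-- The coordinate subspace `span {eᵢ : i ∈ I}`, as a set. -/
def coordSubspace {n : ℕ} (I : Finset (Fin n)) : Set (EuclideanSpace ℝ (Fin n)) :=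
  {x | ∀ i ∉ I, x i = 0}

/-- A set `K ⊆ ℝ₊ⁿ` is anti-blocking if for every coordinate subspace `E` the orthogonal
projection `P_E K` equals the section `K ∩ E`. -/
def IsAntiBlocking {n : ℕ} (K : Set (EuclideanSpace ℝ (Fin n))) : Prop :=
  K ⊆ nonnegOrthant n ∧ ∀ I : Finset (Fin n), coordProj I '' K = K ∩ coordSubspace I

/-- `K` is locally anti-blocking if `(σK) ∩ ℝ₊ⁿ` is anti-blocking for every sign vector `σ`. -/
def IsLocallyAntiBlocking {n : ℕ} (K : Set (EuclideanSpace ℝ (Fin n))) : Prop :=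
  ∀ σ : Fin n → Bool, IsAntiBlocking (sigmaAct σ K ∩ nonnegOrthant n)

/-- The coordinate simplex `conv{0, e₁, …}` in the Euclidean space with coordinates `ι`. -/
def coordSimplex (ι : Type*) [Fintype ι] [DecidableEq ι] : Set (EuclideanSpace ℝ ι) :=
  convexHull ℝ (insert 0 (Set.range fun i : ι => EuclideanSpace.single i (1 : ℝ)))

/-- Restriction to the coordinates in `I`, realizing the orthogonal projection onto
`span {eᵢ : i ∈ I}` as a map onto a `#I`-dimensional Euclidean space (so that volumes of
images compute lower-dimensional Lebesgue measures of coordinate projections). -/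
def restrictCoords {n : ℕ} (I : Finset (Fin n)) (x : EuclideanSpace ℝ (Fin n)) :
    EuclideanSpace ℝ ↥I :=
  (WithLp.toLp 2 (fun i : ↥I => x i) : EuclideanSpace ℝ ↥I)

/-!
A locally anti-blocking body is closed under coordinate projections: reflect `x ∈ K` into
the nonnegative orthant, project there (anti-blocking), and reflect back, which commutes
with the projection. The projection `P_E x` of a point of `K_σ` lies in every orthant whose
signs agree with `σ` on `I`, hence in `K_τ`, and `P_E` fixes it.
-/

section

variable {n : ℕ}

lemma sgn_mul_self (b : Bool) : sgn b * sgn b = 1 := by cases b <;> norm_num [sgn]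

/-- The coordinatewise reflection `x ↦ σx`, whose image map is `sigmaAct σ`. -/
def signFlip (σ : Fin n → Bool) (x : EuclideanSpace ℝ (Fin n)) : EuclideanSpace ℝ (Fin n) :=
  WithLp.toLp 2 fun i => sgn (σ i) * x i

@[simp]
lemma signFlip_apply (σ : Fin n → Bool) (x : EuclideanSpace ℝ (Fin n)) (i : Fin n) :
    signFlip σ x i = sgn (σ i) * x i := rfl

@[simp]
lemma coordProj_apply (I : Finset (Fin n)) (x : EuclideanSpace ℝ (Fin n)) (i : Fin n) :
    coordProj I x i = if i ∈ I then x i else 0 := rfl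

@[simp]
lemma signFlip_signFlip (σ : Fin n → Bool) (x : EuclideanSpace ℝ (Fin n)) :
    signFlip σ (signFlip σ x) = x := by
  ext i
  simp [← mul_assoc, sgn_mul_self]

lemma signFlip_coordProj (σ : Fin n → Bool) (I : Finset (Fin n)) (x : EuclideanSpace ℝ (Fin n)) :
    signFlip σ (coordProj I x) = coordProj I (signFlip σ x) := by
  ext i
  by_cases hi : i ∈ I <;> simp [hi]

@[simp]
lemma coordProj_coordProj (I : Finset (Fin n)) (x : EuclideanSpace ℝ (Fin n)) :
    coordProj I (coordProj I x) = coordProj I x := by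
  ext i
  by_cases hi : i ∈ I <;> simp [hi]

lemma exists_mem_signedOrthant (x : EuclideanSpace ℝ (Fin n)) :
    ∃ σ : Fin n → Bool, x ∈ signedOrthant σ := by
  refine ⟨fun i => decide (0 ≤ x i), fun i => ?_⟩
  by_cases hx : 0 ≤ x i
  · simp [sgn, hx]
  · simp [sgn, hx]; linarith

lemma coordProj_mem_signedOrthant {I : Finset (Fin n)} {σ τ : Fin n → Bool}
    (hστ : ∀ i ∈ I, σ i = τ i) {x : EuclideanSpace ℝ (Fin n)} (hx : x ∈ signedOrthant σ) :
    coordProj I x ∈ signedOrthant τ := by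
  intro i
  by_cases hi : i ∈ I
  · simpa [hi, ← hστ i hi] using hx i
  · simp [hi]

lemma IsAntiBlocking.coordProj_mem {L : Set (EuclideanSpace ℝ (Fin n))} (hL : IsAntiBlocking L)
    (I : Finset (Fin n)) {y : EuclideanSpace ℝ (Fin n)} (hy : y ∈ L) : coordProj I y ∈ L :=
  ((hL.2 I).subset ⟨y, hy, rfl⟩).1

lemma IsLocallyAntiBlocking.coordProj_mem {K : Set (EuclideanSpace ℝ (Fin n))}
    (hK : IsLocallyAntiBlocking K) (I : Finset (Fin n)) {x : EuclideanSpace ℝ (Fin n)}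
    (hx : x ∈ K) : coordProj I x ∈ K := by
  obtain ⟨σ, hσ⟩ := exists_mem_signedOrthant x
  have hflip : signFlip σ x ∈ sigmaAct σ K ∩ nonnegOrthant n := ⟨⟨x, hx, rfl⟩, hσ⟩
  obtain ⟨⟨y, hyK, hy⟩, -⟩ := (hK σ).coordProj_mem I hflip
  have hyx : y = coordProj I x := by
    change signFlip σ y = coordProj I (signFlip σ x) at hy
    rw [← signFlip_coordProj] at hy
    simpa using congrArg (signFlip σ) hy
  exact hyx ▸ hyK

lemma coordProj_image_inter_signedOrthant_subset {K : Set (EuclideanSpace ℝ (Fin n))}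
    (hK : IsLocallyAntiBlocking K) {I : Finset (Fin n)} {σ τ : Fin n → Bool}
    (hστ : ∀ i ∈ I, σ i = τ i) :
    coordProj I '' (K ∩ signedOrthant σ) ⊆ coordProj I '' (K ∩ signedOrthant τ) := by
  rintro _ ⟨x, ⟨hxK, hxσ⟩, rfl⟩
  exact ⟨coordProj I x, ⟨hK.coordProj_mem I hxK, coordProj_mem_signedOrthant hστ hxσ⟩,
    coordProj_coordProj I x⟩

end

theorem coordProj_orthant_piece_eq_general
    (n : ℕ) (K : Set (EuclideanSpace ℝ (Fin n)))
    (hKlab : IsLocallyAntiBlocking K)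
    (I : Finset (Fin n)) (σ τ : Fin n → Bool) (hστ : ∀ i ∈ I, σ i = τ i) :
    coordProj I '' (K ∩ signedOrthant σ) = coordProj I '' (K ∩ signedOrthant τ) :=
  (coordProj_image_inter_signedOrthant_subset hKlab hστ).antisymm
    (coordProj_image_inter_signedOrthant_subset hKlab fun i hi => (hστ i hi).symm)

/-- For a locally anti-blocking body `K` and sign vectors `σ, τ` agreeing on `I`,
the projections of `K_σ` and `K_τ` onto `E = span{eᵢ : i ∈ I}` coincide. -/
theorem coordProj_orthant_piece_eq
    (n : ℕ) (K : Set (EuclideanSpace ℝ (Fin n)))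
    (hKconv : Convex ℝ K) (hKcomp : IsCompact K) (hKne : K.Nonempty)
    (hKlab : IsLocallyAntiBlocking K)
    (I : Finset (Fin n)) (σ τ : Fin n → Bool) (hστ : ∀ i ∈ I, σ i = τ i) :
    coordProj I '' (K ∩ signedOrthant σ) = coordProj I '' (K ∩ signedOrthant τ) :=
  coordProj_orthant_piece_eq_general n K hKlab I σ τ hστ
end
end

section
/- Let α_1 ≥ α_2 ≥ … ≥ α_n ≥ 0, let K = conv{0, α_1 e_1, …, α_n e_n} ⊆ ℝ^n, and let λ ≥ 0. Then Δ_n + λK is the convex hull of (Δ_n + λ P K) ∪ {(1 + λα_n) e_n}, where P is the orthogonal projection onto span{e_1,…,e_{n−1}}; that is, Δ_n + λK = conv( (Δ_n + λ conv{0, α_1 e_1, …, α_{n−1} e_{n−1}}) ∪ {(1 + λα_n) e_n} ). -/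
open MeasureTheory
open scoped Pointwise

noncomputable section

/-! With `c = λαₙ`, the only generators `a + λy` (`a` a vertex of `Δₙ`, `y` a vertex of `K`) of
`Δₙ + λK` that are not already in `Δₙ + λPK` are the points `a + c eₙ`, and
`a + c eₙ = (c/(1+c)) • (1+c)eₙ + (1/(1+c)) • (1+c)a`. Here `(1+c)eₙ` is the extra point, and for
`i < n` the point `(1+c)eᵢ` lies on the segment from `0` to `eᵢ + λαᵢeᵢ ∈ Δₙ + λPK`, since
`αₙ ≤ αᵢ`. -/

section OrderedField

variable {𝕜 V : Type*} [Field 𝕜] [LinearOrder 𝕜] [IsStrictOrderedRing 𝕜]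
  [AddCommGroup V] [Module 𝕜 V]

theorem Convex.one_add_smul_mem_of_le {C : Set V} (hC : Convex 𝕜 C) (h0 : (0 : V) ∈ C)
    {a : V} {c d : 𝕜} (hc : 0 ≤ c) (hcd : c ≤ d) (ha : (1 + d) • a ∈ C) :
    (1 + c) • a ∈ C := by
  have hd : (0 : 𝕜) < 1 + d := by linarith
  have hmem := hC.smul_mem_of_zero_mem h0 ha
    (t := (1 + c) / (1 + d)) ⟨by positivity, (div_le_one hd).2 (by linarith)⟩
  rwa [smul_smul, div_mul_cancel₀ _ hd.ne'] at hmem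

theorem Convex.add_smul_mem_of_one_add_smul_mem {C : Set V} (hC : Convex 𝕜 C) {a v : V}
    {c : 𝕜} (hc : 0 ≤ c) (ha : (1 + c) • a ∈ C) (hv : (1 + c) • v ∈ C) :
    a + c • v ∈ C := by
  have hc1 : (1 + c) ≠ 0 := by positivity
  have hmem := hC ha hv (a := 1 / (1 + c)) (b := c / (1 + c)) (by positivity) (by positivity)
    (by field_simp)
  rwa [smul_smul, smul_smul, one_div_mul_cancel hc1, div_mul_cancel₀ _ hc1, one_smul] at hmem

theorem convexHull_add_smul_convexHull_eq_convexHull_union {ι : Type*} [DecidableEq ι]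
    (e : ι → V) (α : ι → 𝕜) (m : ι) (hαm : 0 ≤ α m) (hmin : ∀ i, α m ≤ α i)
    {l : 𝕜} (hl : 0 ≤ l) :
    convexHull 𝕜 (insert 0 (Set.range e)) +
        l • convexHull 𝕜 (insert 0 (Set.range fun i => α i • e i)) =
      convexHull 𝕜
        ((convexHull 𝕜 (insert 0 (Set.range e)) +
            l • convexHull 𝕜 (insert 0 (Set.range fun i => (if i = m then 0 else α i) • e i))) ∪
          {(1 + l * α m) • e m}) := by
  set S := insert (0 : V) (Set.range e)
  set P := insert (0 : V) (Set.range fun i => (if i = m then 0 else α i) • e i)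
  set c := l * α m
  set p := (1 + c) • e m
  set T := (S + l • P) ∪ {p}
  rw [← convexHull_smul, ← convexHull_smul, ← convexHull_add, ← convexHull_add,
    convexHull_convexHull_union_left]
  have hc : 0 ≤ c := mul_nonneg hl hαm
  have hT : Convex 𝕜 (convexHull 𝕜 T) := convex_convexHull 𝕜 T
  have hP : ∀ i, i ≠ m → α i • e i ∈ P := fun i hi => Set.mem_insert_of_mem _ ⟨i, by simp [hi]⟩
  have hST : ∀ a ∈ S, ∀ y ∈ P, a + l • y ∈ convexHull 𝕜 T := fun a ha y hy =>
    subset_convexHull 𝕜 T (Or.inl (Set.add_mem_add ha (Set.smul_mem_smul_set hy)))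
  have hpT : p ∈ convexHull 𝕜 T := subset_convexHull 𝕜 T (Or.inr rfl)
  have h0T : (0 : V) ∈ convexHull 𝕜 T := by
    simpa using hST 0 (Set.mem_insert _ _) 0 (Set.mem_insert _ _)
  have hscaled : ∀ a ∈ S, (1 + c) • a ∈ convexHull 𝕜 T := by
    rintro _ (rfl | ⟨i, rfl⟩)
    · simpa using h0T
    by_cases hi : i = m
    · exact hi ▸ hpT
    refine hT.one_add_smul_mem_of_le h0T hc (mul_le_mul_of_nonneg_left (hmin i) hl) ?_
    simpa [add_smul, smul_smul] using hST (e i) (Set.mem_insert_of_mem _ ⟨i, rfl⟩) _ (hP i hi)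
  apply le_antisymm
  · refine convexHull_min ?_ hT
    rintro _ ⟨a, ha, _, ⟨y, hy, rfl⟩, rfl⟩
    rcases hy with rfl | ⟨j, rfl⟩
    · exact hST a ha 0 (Set.mem_insert _ _)
    by_cases hj : j = m
    · rw [hj]
      show a + l • (α m • e m) ∈ convexHull 𝕜 T
      rw [smul_smul]
      exact hT.add_smul_mem_of_one_add_smul_mem hc (hscaled a ha) hpT
    · exact hST a ha _ (hP j hj)
  · refine convexHull_mono (Set.union_subset (Set.add_subset_add_left
      (Set.smul_set_mono ?_)) ?_)
    · rintro _ (rfl | ⟨i, rfl⟩)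
      · exact Set.mem_insert _ _
      by_cases hi : i = m
      · simp [hi]
      · exact Set.mem_insert_of_mem _ ⟨i, by simp [hi]⟩
    · rintro _ rfl
      refine ⟨e m, Set.mem_insert_of_mem _ ⟨m, rfl⟩, l • (α m • e m),
        Set.smul_mem_smul_set (Set.mem_insert_of_mem _ ⟨m, rfl⟩), ?_⟩
      simp [p, c, add_smul, smul_smul]

end OrderedField

def coordProjₗ {n : ℕ} (I : Finset (Fin n)) :
    EuclideanSpace ℝ (Fin n) →ₗ[ℝ] EuclideanSpace ℝ (Fin n) where
  toFun := coordProj I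
  map_add' x y := by ext i; by_cases h : i ∈ I <;> simp [coordProj, h]
  map_smul' c x := by ext i; by_cases h : i ∈ I <;> simp [coordProj, h]

theorem coordProj_erase_smul_single {n : ℕ} (m i : Fin n) (a : ℝ) :
    coordProj (Finset.univ.erase m) (a • EuclideanSpace.single i (1 : ℝ)) =
      (if i = m then 0 else a) • EuclideanSpace.single i (1 : ℝ) := by
  ext j
  by_cases hj : j = i <;> by_cases him : i = m <;> subst_vars <;> simp [coordProj, *]

theorem coordProj_erase_image_convexHull {n : ℕ} (m : Fin n) (α : Fin n → ℝ) :
    coordProj (Finset.univ.erase m) ''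
        convexHull ℝ (insert 0 (Set.range fun i => α i • EuclideanSpace.single i (1 : ℝ))) =
      convexHull ℝ (insert 0 (Set.range fun i =>
        (if i = m then 0 else α i) • EuclideanSpace.single i (1 : ℝ))) := by
  rw [show coordProj (Finset.univ.erase m) = coordProjₗ (Finset.univ.erase m) from rfl,
    LinearMap.image_convexHull, Set.image_insert_eq, ← Set.range_comp, map_zero]
  congr 3
  exact funext fun i => coordProj_erase_smul_single m i (α i)

/-- For `α₁ ≥ … ≥ αₙ ≥ 0`, `K = conv{0, α₁e₁, …, αₙeₙ}` and `λ ≥ 0`,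
`Δₙ + λK = conv((Δₙ + λPK) ∪ {(1 + λαₙ)eₙ})`, where `P` is the orthogonal projection onto
`span{e₁, …, e_{n-1}}`. -/
theorem simplex_add_smul_eq_convexHull
    (n : ℕ) (hn : 0 < n) (α : Fin n → ℝ) (hα0 : ∀ i, 0 ≤ α i) (hαmono : Antitone α)
    (K : Set (EuclideanSpace ℝ (Fin n)))
    (hK : K = convexHull ℝ
      (insert 0 (Set.range fun i => α i • EuclideanSpace.single i (1 : ℝ))))
    (l : ℝ) (hl : 0 ≤ l) :
    coordSimplex (Fin n) + l • K =
      convexHull ℝ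
        ((coordSimplex (Fin n) +
            l • (coordProj (Finset.univ.erase (⟨n - 1, by omega⟩ : Fin n)) '' K)) ∪
          {(1 + l * α ⟨n - 1, by omega⟩) •
            EuclideanSpace.single (⟨n - 1, by omega⟩ : Fin n) (1 : ℝ)}) := by
  subst hK
  rw [coordSimplex, coordProj_erase_image_convexHull]
  exact convexHull_add_smul_convexHull_eq_convexHull_union _ α _ (hα0 _)
    (fun i => hαmono (Fin.le_def.mpr (Nat.le_pred_of_lt i.isLt))) hl
end
end
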